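/- arXiv:math/0312466 — 12 statements merged into one kernel-verified Lean document; each statement's English description precedes it below -/
import Mathlib

section
/- For all p, q, r ∈ Q, θ(p, q)·θ(p.q, r) = (p ▷ θ(q, r))·θ(p ◁ θ(q, r), q.r), where the products on both sides are taken in F. -/
/-!
Both sides are the `F`-component of `p * q * r` in its unique factorization `F · Q`: the left
side comes from bracketing it as `(p * q) * r`, the right side from `p * (q * r)`, where
`p * θ(q, r)` is moved past `p` by the action `▷, ◁`.
-/

lemma Subgroup.fst_eq_of_mul_eq_mul_of_existsUnique {G : Type*} [Group G] {F : Subgroup G}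
    {Q : Set G} (hL : ∀ g : G, ∃! xq : F × Q, (xq.1 : G) * (xq.2 : G) = g)
    {x y : F} {q q' : Q} (h : (x : G) * q = y * q') : x = y :=
  congrArg Prod.fst ((hL _).unique h rfl : (x, q) = (y, q'))

theorem stmt5_general {G : Type*} [Group G] (F : Subgroup G) (Q : Set G)
    (hL : ∀ g : G, ∃! xq : F × Q, (xq.1 : G) * (xq.2 : G) = g)
    (actF : Q → F → F) (actQ : Q → F → Q)
    (hact : ∀ (q : Q) (x : F), (q : G) * (x : G) = (actF q x : G) * ((actQ q x : Q) : G))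
    (mulQ : Q → Q → Q) (θ : Q → Q → F)
    (hθ : ∀ p q : Q, (p : G) * (q : G) = ((θ p q : F) : G) * ((mulQ p q : Q) : G)) :
    ∀ p q r : Q, θ p q * θ (mulQ p q) r = actF p (θ q r) * θ (actQ p (θ q r)) (mulQ q r) := by
  intro p q r
  apply Subgroup.fst_eq_of_mul_eq_mul_of_existsUnique hL
    (q := mulQ (mulQ p q) r) (q' := mulQ (actQ p (θ q r)) (mulQ q r))
  calc ((θ p q * θ (mulQ p q) r : F) : G) * (mulQ (mulQ p q) r : G)
      = p * q * r := by
        rw [Subgroup.coe_mul, mul_assoc, ← hθ, ← mul_assoc, ← hθ]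
    _ = p * (θ q r : G) * (mulQ q r : G) := by rw [mul_assoc, hθ q r, mul_assoc]
    _ = ((actF p (θ q r) * θ (actQ p (θ q r)) (mulQ q r) : F) : G)
          * (mulQ (actQ p (θ q r)) (mulQ q r) : G) := by
        rw [hact, mul_assoc, hθ, Subgroup.coe_mul, mul_assoc]

theorem stmt5 {G : Type*} [Group G] [Fintype G] (F : Subgroup G) (Q : Set G)
    (h1 : (1 : G) ∈ Q)
    (hL : ∀ g : G, ∃! xq : F × Q, (xq.1 : G) * (xq.2 : G) = g)
    (hR : ∀ g : G, ∃! py : Q × F, (py.1 : G) * (py.2 : G) = g)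
    (actF : Q → F → F) (actQ : Q → F → Q)
    (hact : ∀ (q : Q) (x : F), (q : G) * (x : G) = (actF q x : G) * ((actQ q x : Q) : G))
    (mulQ : Q → Q → Q) (θ : Q → Q → F)
    (hθ : ∀ p q : Q, (p : G) * (q : G) = ((θ p q : F) : G) * ((mulQ p q : Q) : G)) :
    ∀ p q r : Q, θ p q * θ (mulQ p q) r = actF p (θ q r) * θ (actQ p (θ q r)) (mulQ q r) :=
  stmt5_general F Q hL actF actQ hact mulQ θ hθ
end

section
/- For all p, q, r ∈ Q, (p ◁ θ(q, r)).(q.r) = (p.q).r. -/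
/-! Both sides of the identity are the `Q`-component of the product `p * q * r` in the
factorisation `G = F Q`: bracketing it as `(p q) r` yields `(p.q).r`, bracketing it as `p (q r)`
and moving `θ(q,r)` past `p` yields `(p ◁ θ(q,r)).(q.r)`. Uniqueness of the factorisation
identifies the two. -/

theorem eq_of_mul_eq_mul_of_existsUnique {G : Type*} [Group G] {F : Subgroup G} {Q : Set G}
    (hL : ∀ g : G, ∃! xq : F × Q, (xq.1 : G) * (xq.2 : G) = g)
    {x y : F} {q r : Q} (h : (x : G) * q = (y : G) * r) : q = r :=
  congrArg Prod.snd ((hL _).unique (y₁ := (x, q)) (y₂ := (y, r)) h rfl)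

section Transversal

variable {G : Type*} [Group G] {F : Subgroup G} {Q : Set G}
  {actF : Q → F → F} {actQ : Q → F → Q} {mulQ : Q → Q → Q} {θ : Q → Q → F}

theorem mul_mul_eq_θ_mul_θ_mul_mulQ_mulQ
    (hθ : ∀ p q : Q, (p : G) * (q : G) = ((θ p q : F) : G) * ((mulQ p q : Q) : G)) (p q r : Q) :
    (p : G) * q * r = ((θ p q * θ (mulQ p q) r : F) : G) * (mulQ (mulQ p q) r : G) := by
  rw [hθ p q, mul_assoc, hθ, ← mul_assoc, Subgroup.coe_mul]

theorem mul_mul_eq_actF_mul_θ_mul_mulQ_actQ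
    (hact : ∀ (q : Q) (x : F), (q : G) * (x : G) = (actF q x : G) * ((actQ q x : Q) : G))
    (hθ : ∀ p q : Q, (p : G) * (q : G) = ((θ p q : F) : G) * ((mulQ p q : Q) : G)) (p q r : Q) :
    (p : G) * q * r = ((actF p (θ q r) * θ (actQ p (θ q r)) (mulQ q r) : F) : G) *
      (mulQ (actQ p (θ q r)) (mulQ q r) : G) := by
  rw [mul_assoc, hθ q r, ← mul_assoc, hact, mul_assoc, hθ, ← mul_assoc, Subgroup.coe_mul]

end Transversal

theorem stmt6_general {G : Type*} [Group G] (F : Subgroup G) (Q : Set G)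
    (hL : ∀ g : G, ∃! xq : F × Q, (xq.1 : G) * (xq.2 : G) = g)
    (actF : Q → F → F) (actQ : Q → F → Q)
    (hact : ∀ (q : Q) (x : F), (q : G) * (x : G) = (actF q x : G) * ((actQ q x : Q) : G))
    (mulQ : Q → Q → Q) (θ : Q → Q → F)
    (hθ : ∀ p q : Q, (p : G) * (q : G) = ((θ p q : F) : G) * ((mulQ p q : Q) : G)) :
    ∀ p q r : Q, mulQ (actQ p (θ q r)) (mulQ q r) = mulQ (mulQ p q) r := by
  intro p q r
  exact eq_of_mul_eq_mul_of_existsUnique hL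
    ((mul_mul_eq_actF_mul_θ_mul_mulQ_actQ hact hθ p q r).symm.trans
      (mul_mul_eq_θ_mul_θ_mul_mulQ_mulQ hθ p q r))

theorem stmt6 {G : Type*} [Group G] [Fintype G] (F : Subgroup G) (Q : Set G)
    (h1 : (1 : G) ∈ Q)
    (hL : ∀ g : G, ∃! xq : F × Q, (xq.1 : G) * (xq.2 : G) = g)
    (hR : ∀ g : G, ∃! py : Q × F, (py.1 : G) * (py.2 : G) = g)
    (actF : Q → F → F) (actQ : Q → F → Q)
    (hact : ∀ (q : Q) (x : F), (q : G) * (x : G) = (actF q x : G) * ((actQ q x : Q) : G))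
    (mulQ : Q → Q → Q) (θ : Q → Q → F)
    (hθ : ∀ p q : Q, (p : G) * (q : G) = ((θ p q : F) : G) * ((mulQ p q : Q) : G)) :
    ∀ p q r : Q, mulQ (actQ p (θ q r)) (mulQ q r) = mulQ (mulQ p q) r :=
  stmt6_general F Q hL actF actQ hact mulQ θ hθ
end

section
/- For every p ∈ Q there exist unique elements p^L, p^R ∈ Q such that p^L . p = e and p . p^R = e, where . is the induced multiplication on Q. -/
/-!
Writing `p * q = θ(p,q) * (p.q)` and using that `e = 1` is the representative of the coset `F`,
one gets `p.q = e ↔ p * q ∈ F`. So `p^L` must be the representative of the right coset `F p⁻¹`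
and `p^R` the representative of the left coset `p⁻¹ F`; both exist and are unique because `Q`
meets every right and every left coset of `F` exactly once.
-/

section CosetRepresentatives

variable {G : Type*} [Group G] {F : Subgroup G} {Q : Set G}

theorem existsUnique_mul_inv_mem_of_existsUnique_mul
    (hL : ∀ g : G, ∃! xq : F × Q, (xq.1 : G) * (xq.2 : G) = g) (g : G) :
    ∃! q : Q, (q : G) * g⁻¹ ∈ F := by
  obtain ⟨⟨x, q⟩, hxq, huniq⟩ := hL g
  refine ⟨q, ?_, fun q' hq' => ?_⟩
  · simp [← hxq]
  · have hdecomp : ((⟨_, F.inv_mem hq'⟩ : F) : G) * (q' : G) = g := by simp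
    exact congrArg Prod.snd (huniq (_, q') hdecomp)

theorem existsUnique_inv_mul_mem_of_existsUnique_mul
    (hR : ∀ g : G, ∃! py : Q × F, (py.1 : G) * (py.2 : G) = g) (g : G) :
    ∃! q : Q, g⁻¹ * (q : G) ∈ F := by
  obtain ⟨⟨q, y⟩, hqy, huniq⟩ := hR g
  refine ⟨q, ?_, fun q' hq' => ?_⟩
  · simp [← hqy]
  · have hdecomp : (q' : G) * ((⟨_, F.inv_mem hq'⟩ : F) : G) = g := by simp
    exact congrArg Prod.fst (huniq (q', _) hdecomp)

theorem eq_one_iff_mul_mem_of_mul_eq_mul (h1 : (1 : G) ∈ Q)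
    (hL : ∀ g : G, ∃! xq : F × Q, (xq.1 : G) * (xq.2 : G) = g)
    {p q : G} (x : F) (r : Q) (hpq : p * q = (x : G) * (r : G)) :
    r = ⟨1, h1⟩ ↔ p * q ∈ F := by
  constructor
  · rintro rfl
    simp [hpq]
  · intro hmem
    obtain ⟨_, _, huniq⟩ := hL (p * q)
    have hx := huniq (x, r) hpq.symm
    have hone := huniq (⟨_, hmem⟩, ⟨1, h1⟩) (mul_one _)
    exact congrArg Prod.snd (hx.trans hone.symm)

end CosetRepresentatives

theorem stmt9_general {G : Type*} [Group G] (F : Subgroup G) (Q : Set G)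
    (h1 : (1 : G) ∈ Q)
    (hL : ∀ g : G, ∃! xq : F × Q, (xq.1 : G) * (xq.2 : G) = g)
    (hR : ∀ g : G, ∃! py : Q × F, (py.1 : G) * (py.2 : G) = g)
    (mulQ : Q → Q → Q) (θ : Q → Q → F)
    (hθ : ∀ p q : Q, (p : G) * (q : G) = ((θ p q : F) : G) * ((mulQ p q : Q) : G)) :
    ∀ p : Q, (∃! l : Q, mulQ l p = ⟨1, h1⟩) ∧ (∃! r : Q, mulQ p r = ⟨1, h1⟩) := by
  have hmulQ (p q : Q) : mulQ p q = ⟨1, h1⟩ ↔ (p : G) * q ∈ F :=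
    eq_one_iff_mul_mem_of_mul_eq_mul h1 hL _ _ (hθ p q)
  intro p
  simp only [hmulQ]
  constructor
  · simpa using existsUnique_mul_inv_mem_of_existsUnique_mul hL (p : G)⁻¹
  · simpa using existsUnique_inv_mul_mem_of_existsUnique_mul hR (p : G)⁻¹

theorem stmt9 {G : Type*} [Group G] [Fintype G] (F : Subgroup G) (Q : Set G)
    (h1 : (1 : G) ∈ Q)
    (hL : ∀ g : G, ∃! xq : F × Q, (xq.1 : G) * (xq.2 : G) = g)
    (hR : ∀ g : G, ∃! py : Q × F, (py.1 : G) * (py.2 : G) = g)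
    (actF : Q → F → F) (actQ : Q → F → Q)
    (hact : ∀ (q : Q) (x : F), (q : G) * (x : G) = (actF q x : G) * ((actQ q x : Q) : G))
    (mulQ : Q → Q → Q) (θ : Q → Q → F)
    (hθ : ∀ p q : Q, (p : G) * (q : G) = ((θ p q : F) : G) * ((mulQ p q : Q) : G)) :
    ∀ p : Q, (∃! l : Q, mulQ l p = ⟨1, h1⟩) ∧ (∃! r : Q, mulQ p r = ⟨1, h1⟩) :=
  stmt9_general F Q h1 hL hR mulQ θ hθ
end

section
/- For every p ∈ Q, p^L ◁ θ(p, p^R) = p^R and p^L ▷ θ(p, p^R) = θ(p^L, p). -/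
/-
Both `p^L θ(p, p^R)` and `θ(p^L, p) p^R` equal `p^L p p^R`, since `p p^R = θ(p, p^R)` and
`p^L p = θ(p^L, p)`. Expanding the first as `(p^L ▷ θ(p, p^R)) (p^L ◁ θ(p, p^R))`, uniqueness of the
factorisation `G = F Q` identifies the two factors.
-/

theorem eq_and_eq_of_coe_mul_eq_coe_mul {G : Type*} [Group G] {F : Subgroup G} {Q : Set G}
    (hL : ∀ g : G, ∃! xq : F × Q, (xq.1 : G) * (xq.2 : G) = g)
    {x y : F} {q r : Q} (h : (x : G) * q = y * r) : x = y ∧ q = r := by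
  obtain ⟨_, _, huniq⟩ := hL ((y : G) * r)
  exact Prod.ext_iff.mp ((huniq (x, q) h).trans (huniq (y, r) rfl).symm)

theorem coe_mul_eq_of_mul_eq_one {G : Type*} [Group G] {F : Subgroup G} {Q : Set G}
    (h1 : (1 : G) ∈ Q) {mulQ : Q → Q → Q} {θ : Q → Q → F}
    (hθ : ∀ p q : Q, (p : G) * (q : G) = ((θ p q : F) : G) * ((mulQ p q : Q) : G))
    {p q : Q} (hpq : mulQ p q = ⟨1, h1⟩) : (p : G) * q = θ p q := by
  rw [hθ, hpq, mul_one]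

theorem stmt11_general {G : Type*} [Group G] (F : Subgroup G) (Q : Set G)
    (h1 : (1 : G) ∈ Q)
    (hL : ∀ g : G, ∃! xq : F × Q, (xq.1 : G) * (xq.2 : G) = g)
    (actF : Q → F → F) (actQ : Q → F → Q)
    (hact : ∀ (q : Q) (x : F), (q : G) * (x : G) = (actF q x : G) * ((actQ q x : Q) : G))
    (mulQ : Q → Q → Q) (θ : Q → Q → F)
    (hθ : ∀ p q : Q, (p : G) * (q : G) = ((θ p q : F) : G) * ((mulQ p q : Q) : G))
    (L R : Q → Q)
    (hLdef : ∀ p : Q, mulQ (L p) p = ⟨1, h1⟩)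
    (hRdef : ∀ p : Q, mulQ p (R p) = ⟨1, h1⟩) :
    ∀ p : Q, actQ (L p) (θ p (R p)) = R p ∧ actF (L p) (θ p (R p)) = θ (L p) p := by
  intro p
  have hLp := coe_mul_eq_of_mul_eq_one h1 hθ (hLdef p)
  have hpR := coe_mul_eq_of_mul_eq_one h1 hθ (hRdef p)
  have key : (actF (L p) (θ p (R p)) : G) * (actQ (L p) (θ p (R p)) : G) =
      (θ (L p) p : G) * (R p : G) := by
    rw [← hact, ← hpR, ← mul_assoc, hLp]
  obtain ⟨hF, hQ⟩ := eq_and_eq_of_coe_mul_eq_coe_mul hL key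
  exact ⟨hQ, hF⟩

theorem stmt11 {G : Type*} [Group G] [Fintype G] (F : Subgroup G) (Q : Set G)
    (h1 : (1 : G) ∈ Q)
    (hL : ∀ g : G, ∃! xq : F × Q, (xq.1 : G) * (xq.2 : G) = g)
    (hR : ∀ g : G, ∃! py : Q × F, (py.1 : G) * (py.2 : G) = g)
    (actF : Q → F → F) (actQ : Q → F → Q)
    (hact : ∀ (q : Q) (x : F), (q : G) * (x : G) = (actF q x : G) * ((actQ q x : Q) : G))
    (mulQ : Q → Q → Q) (θ : Q → Q → F)
    (hθ : ∀ p q : Q, (p : G) * (q : G) = ((θ p q : F) : G) * ((mulQ p q : Q) : G))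
    (L R : Q → Q)
    (hLdef : ∀ p : Q, mulQ (L p) p = ⟨1, h1⟩)
    (hRdef : ∀ p : Q, mulQ p (R p) = ⟨1, h1⟩) :
    ∀ p : Q, actQ (L p) (θ p (R p)) = R p ∧ actF (L p) (θ p (R p)) = θ (L p) p :=
  stmt11_general F Q h1 hL actF actQ hact mulQ θ hθ L R hLdef hRdef
end

section
/- For every p ∈ Q, p^{LL} = p ◁ θ(p^L, p)⁻¹, where p^{LL} = (p^L)^L. -/
/-!
Since `p^L.p = e`, the defining relation of `θ` reads `θ(p^L, p) = p^L p` in `G`, so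
`p θ(p^L, p)⁻¹ = (p^L)⁻¹`, which by definition of `◁` factors as `(p ▷ θ(p^L, p)⁻¹)(p ◁ θ(p^L, p)⁻¹)`.
Applied to `p^L`, the same relation gives the factorization `(p^L)⁻¹ = θ(p^{LL}, p^L)⁻¹ p^{LL}`.
Uniqueness of the factorization `G = F Q` identifies the two `Q`-parts.
-/

section Transversal

variable {G : Type*} [Group G] {F : Subgroup G} {Q : Set G}

theorem eq_of_mul_eq_mul_of_existsUnique_mul
    (hL : ∀ g : G, ∃! xq : F × Q, (xq.1 : G) * (xq.2 : G) = g)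
    {x x' : F} {q q' : Q} (h : (x : G) * q = x' * q') : q = q' := by
  obtain ⟨_, _, huniq⟩ := hL ((x' : G) * q')
  exact congrArg Prod.snd ((huniq (x, q) h).trans (huniq (x', q') rfl).symm)

theorem coe_cocycle_eq_mul_of_mul_eq_one {h1 : (1 : G) ∈ Q}
    {mulQ : Q → Q → Q} {θ : Q → Q → F}
    (hθ : ∀ p q : Q, (p : G) * (q : G) = ((θ p q : F) : G) * ((mulQ p q : Q) : G))
    {p q : Q} (hpq : mulQ p q = ⟨1, h1⟩) : ((θ p q : F) : G) = p * q := by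
  simpa [hpq] using (hθ p q).symm

end Transversal

theorem stmt12_general {G : Type*} [Group G] (F : Subgroup G) (Q : Set G)
    (h1 : (1 : G) ∈ Q)
    (hL : ∀ g : G, ∃! xq : F × Q, (xq.1 : G) * (xq.2 : G) = g)
    (actF : Q → F → F) (actQ : Q → F → Q)
    (hact : ∀ (q : Q) (x : F), (q : G) * (x : G) = (actF q x : G) * ((actQ q x : Q) : G))
    (mulQ : Q → Q → Q) (θ : Q → Q → F)
    (hθ : ∀ p q : Q, (p : G) * (q : G) = ((θ p q : F) : G) * ((mulQ p q : Q) : G))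
    (L : Q → Q)
    (hLdef : ∀ p : Q, mulQ (L p) p = ⟨1, h1⟩) :
    ∀ p : Q, L (L p) = actQ p (θ (L p) p)⁻¹ := by
  intro p
  have hθp := coe_cocycle_eq_mul_of_mul_eq_one hθ (hLdef p)
  have hθLp := coe_cocycle_eq_mul_of_mul_eq_one hθ (hLdef (L p))
  refine eq_of_mul_eq_mul_of_existsUnique_mul hL (x := (θ (L (L p)) (L p))⁻¹)
    (x' := actF p (θ (L p) p)⁻¹) ?_
  rw [← hact]
  push_cast
  rw [hθp, hθLp]
  group

theorem stmt12 {G : Type*} [Group G] [Fintype G] (F : Subgroup G) (Q : Set G)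
    (h1 : (1 : G) ∈ Q)
    (hL : ∀ g : G, ∃! xq : F × Q, (xq.1 : G) * (xq.2 : G) = g)
    (hR : ∀ g : G, ∃! py : Q × F, (py.1 : G) * (py.2 : G) = g)
    (actF : Q → F → F) (actQ : Q → F → Q)
    (hact : ∀ (q : Q) (x : F), (q : G) * (x : G) = (actF q x : G) * ((actQ q x : Q) : G))
    (mulQ : Q → Q → Q) (θ : Q → Q → F)
    (hθ : ∀ p q : Q, (p : G) * (q : G) = ((θ p q : F) : G) * ((mulQ p q : Q) : G))
    (L R : Q → Q)
    (hLdef : ∀ p : Q, mulQ (L p) p = ⟨1, h1⟩)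
    (hRdef : ∀ p : Q, mulQ p (R p) = ⟨1, h1⟩) :
    ∀ p : Q, L (L p) = actQ p (θ (L p) p)⁻¹ :=
  stmt12_general F Q h1 hL actF actQ hact mulQ θ hθ L hLdef
end

section
/- For every p ∈ Q and x ∈ F, (p ◁ x)^L = p^L ◁ (p ▷ x). -/
/-! `q^L` is characterised as the unique `u ∈ Q` with `u q ∈ F`, because `Q` meets every right
coset `F g` exactly once. With `m = p^L` and `a = p ▷ x`, the factorisations
`m (p x) = m a (p ◁ x) = (m ▷ a) (m ◁ a) (p ◁ x)` show that `(m ◁ a) (p ◁ x) ∈ F (m p) x = F`,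
so `m ◁ a` is the left inverse of `p ◁ x`. -/

section CosetRepresentatives

variable {G : Type*} [Group G] {F : Subgroup G} {Q : Set G}

theorem rep_eq_of_mul_eq (hL : ∀ g : G, ∃! xq : F × Q, (xq.1 : G) * (xq.2 : G) = g)
    {f f' : F} {q q' : Q} (h : (f : G) * q = f' * q') : q = q' := by
  obtain ⟨_, _, huniq⟩ := hL (f * q)
  exact congrArg Prod.snd ((huniq (f, q) rfl).trans (huniq (f', q') h.symm).symm)

theorem rep_eq_of_mul_mem (hL : ∀ g : G, ∃! xq : F × Q, (xq.1 : G) * (xq.2 : G) = g)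
    {u v : Q} {g : G} (hu : (u : G) * g ∈ F) (hv : (v : G) * g ∈ F) : u = v :=
  rep_eq_of_mul_eq hL (f := ⟨v * g * (u * g)⁻¹, F.mul_mem hv (F.inv_mem hu)⟩) (f' := 1)
    (by simp)

theorem mul_mem_of_mulQ_eq_one {mulQ : Q → Q → Q} {θ : Q → Q → F}
    (hθ : ∀ p q : Q, (p : G) * (q : G) = ((θ p q : F) : G) * ((mulQ p q : Q) : G))
    {p q : Q} (h : ((mulQ p q : Q) : G) = 1) : (p : G) * q ∈ F := by
  simp [hθ p q, h]

theorem actQ_actF_mul_actQ_mem {actF : Q → F → F} {actQ : Q → F → Q}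
    (hact : ∀ (q : Q) (x : F), (q : G) * (x : G) = (actF q x : G) * ((actQ q x : Q) : G))
    {m p : Q} (hmp : (m : G) * p ∈ F) (x : F) :
    ((actQ m (actF p x) : Q) : G) * (actQ p x : G) ∈ F := by
  have hfactor : ((actQ m (actF p x) : Q) : G) * (actQ p x : G)
      = (actF m (actF p x) : G)⁻¹ * ((m * p) * x) := by
    rw [mul_assoc (m : G), hact p x, ← mul_assoc (m : G), hact m]
    group
  rw [hfactor]
  exact F.mul_mem (F.inv_mem (SetLike.coe_mem _)) (F.mul_mem hmp x.2)

end CosetRepresentatives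

theorem stmt13_general {G : Type*} [Group G] (F : Subgroup G) (Q : Set G)
    (h1 : (1 : G) ∈ Q)
    (hL : ∀ g : G, ∃! xq : F × Q, (xq.1 : G) * (xq.2 : G) = g)
    (actF : Q → F → F) (actQ : Q → F → Q)
    (hact : ∀ (q : Q) (x : F), (q : G) * (x : G) = (actF q x : G) * ((actQ q x : Q) : G))
    (mulQ : Q → Q → Q) (θ : Q → Q → F)
    (hθ : ∀ p q : Q, (p : G) * (q : G) = ((θ p q : F) : G) * ((mulQ p q : Q) : G))
    (L : Q → Q)
    (hLdef : ∀ p : Q, mulQ (L p) p = ⟨1, h1⟩) :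
    ∀ (p : Q) (x : F), L (actQ p x) = actQ (L p) (actF p x) := by
  have hLmul (p : Q) : (L p : G) * p ∈ F :=
    mul_mem_of_mulQ_eq_one hθ (congrArg Subtype.val (hLdef p))
  intro p x
  exact rep_eq_of_mul_mem hL (hLmul _) (actQ_actF_mul_actQ_mem hact (hLmul p) x)

theorem stmt13 {G : Type*} [Group G] [Fintype G] (F : Subgroup G) (Q : Set G)
    (h1 : (1 : G) ∈ Q)
    (hL : ∀ g : G, ∃! xq : F × Q, (xq.1 : G) * (xq.2 : G) = g)
    (hR : ∀ g : G, ∃! py : Q × F, (py.1 : G) * (py.2 : G) = g)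
    (actF : Q → F → F) (actQ : Q → F → Q)
    (hact : ∀ (q : Q) (x : F), (q : G) * (x : G) = (actF q x : G) * ((actQ q x : Q) : G))
    (mulQ : Q → Q → Q) (θ : Q → Q → F)
    (hθ : ∀ p q : Q, (p : G) * (q : G) = ((θ p q : F) : G) * ((mulQ p q : Q) : G))
    (L R : Q → Q)
    (hLdef : ∀ p : Q, mulQ (L p) p = ⟨1, h1⟩)
    (hRdef : ∀ p : Q, mulQ p (R p) = ⟨1, h1⟩) :
    ∀ (p : Q) (x : F), L (actQ p x) = actQ (L p) (actF p x) :=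
  stmt13_general F Q h1 hL actF actQ hact mulQ θ hθ L hLdef
end

section
/- Define p ≻ x = θ(p, p^R)⁻¹ · (p ▷ x) · θ(p ◁ x, (p ◁ x)^R) for p ∈ Q, x ∈ F. Then p ≻ (p^R ▷ x) = x and p^R ▷ (p ≻ x) = x for all p ∈ Q, x ∈ F; in particular the map x ↦ p ≻ x is a bijection of F with inverse x ↦ p^R ▷ x. -/
/-!
Writing `q = p ◁ x`, the factorisations `p x = (p ▷ x) q` and `p p^R = θ(p, p^R)` collapse the
defining formula to `p ≻ x = (p^R)⁻¹ x q^R`, i.e. `p^R (p ≻ x) = x q^R`. Reading this through the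
unique factorisation `G = F Q` gives `p^R ▷ (p ≻ x) = x`. Conversely, if `p^R x = y q'` then
`(p ◁ y) q' = (p ▷ y)⁻¹ p p^R x ∈ F`, so `q'` is the right inverse of `p ◁ y`, and the same formula
gives `p ≻ y = (p^R)⁻¹ y q' = x`.
-/

section Factorization

variable {G : Type*} [Group G] {F : Subgroup G} {Q : Set G}

theorem Subgroup.left_factor_eq_of_existsUnique
    (hL : ∀ g : G, ∃! xq : F × Q, (xq.1 : G) * (xq.2 : G) = g)
    {x y : F} {a b : Q} (h : (x : G) * a = y * b) : x = y :=
  congrArg Prod.fst ((hL _).unique (y₁ := (x, a)) (y₂ := (y, b)) h rfl)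

theorem Subgroup.right_factor_eq_of_existsUnique
    (hR : ∀ g : G, ∃! py : Q × F, (py.1 : G) * (py.2 : G) = g)
    {a b : Q} {x y : F} (h : (a : G) * x = b * y) : a = b :=
  congrArg Prod.fst ((hR _).unique (y₁ := (a, x)) (y₂ := (b, y)) h rfl)

end Factorization

section Matched

variable {G : Type*} [Group G] {F : Subgroup G} {Q : Set G}
  {actF : Q → F → F} {actQ : Q → F → Q} {θ : Q → Q → F} {mulQ : Q → Q → Q} {R : Q → Q}

theorem mul_rightInv_eq_theta (h1 : (1 : G) ∈ Q)
    (hθ : ∀ p q : Q, (p : G) * (q : G) = ((θ p q : F) : G) * ((mulQ p q : Q) : G))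
    (hRdef : ∀ p : Q, mulQ p (R p) = ⟨1, h1⟩) (p : Q) :
    (p : G) * R p = θ p (R p) := by
  rw [hθ, hRdef]
  exact mul_one _

theorem eq_rightInv_of_mul_mem (h1 : (1 : G) ∈ Q)
    (hR : ∀ g : G, ∃! py : Q × F, (py.1 : G) * (py.2 : G) = g)
    (hθ : ∀ p q : Q, (p : G) * (q : G) = ((θ p q : F) : G) * ((mulQ p q : Q) : G))
    (hRdef : ∀ p : Q, mulQ p (R p) = ⟨1, h1⟩) {s a : Q} (h : (s : G) * a ∈ F) :
    a = R s := by
  have hsR : (s : G) * R s ∈ F := mul_rightInv_eq_theta h1 hθ hRdef s ▸ (θ s (R s)).2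
  refine Subgroup.right_factor_eq_of_existsUnique hR
    (x := ⟨_, F.inv_mem h⟩) (y := ⟨_, F.inv_mem hsR⟩) ?_
  simp only [mul_inv_rev, ← mul_assoc, mul_inv_cancel, one_mul]

theorem rightInv_actQ_eq_of_mul_mem (h1 : (1 : G) ∈ Q)
    (hR : ∀ g : G, ∃! py : Q × F, (py.1 : G) * (py.2 : G) = g)
    (hact : ∀ (q : Q) (x : F), (q : G) * (x : G) = (actF q x : G) * ((actQ q x : Q) : G))
    (hθ : ∀ p q : Q, (p : G) * (q : G) = ((θ p q : F) : G) * ((mulQ p q : Q) : G))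
    (hRdef : ∀ p : Q, mulQ p (R p) = ⟨1, h1⟩) {p a : Q} {x : F}
    (h : (p : G) * x * a ∈ F) : R (actQ p x) = a := by
  refine (eq_rightInv_of_mul_mem h1 hR hθ hRdef ?_).symm
  have : (actQ p x : G) = (actF p x : G)⁻¹ * (p * x) := eq_inv_mul_of_mul_eq (hact p x).symm
  rw [this, mul_assoc]
  exact F.mul_mem (F.inv_mem (actF p x).2) h

theorem rightInv_mul_eq_mul_rightInv_actQ (h1 : (1 : G) ∈ Q)
    (hact : ∀ (q : Q) (x : F), (q : G) * (x : G) = (actF q x : G) * ((actQ q x : Q) : G))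
    (hθ : ∀ p q : Q, (p : G) * (q : G) = ((θ p q : F) : G) * ((mulQ p q : Q) : G))
    (hRdef : ∀ p : Q, mulQ p (R p) = ⟨1, h1⟩) {succ : Q → F → F}
    (hsucc : ∀ (p : Q) (x : F),
      succ p x = (θ p (R p))⁻¹ * actF p x * θ (actQ p x) (R (actQ p x)))
    (p : Q) (x : F) : (R p : G) * succ p x = x * R (actQ p x) := by
  have hactF : (actF p x : G) = p * x * (actQ p x : G)⁻¹ := eq_mul_inv_of_mul_eq (hact p x).symm
  rw [hsucc, Subgroup.coe_mul, Subgroup.coe_mul, Subgroup.coe_inv, hactF,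
    ← mul_rightInv_eq_theta h1 hθ hRdef, ← mul_rightInv_eq_theta h1 hθ hRdef]
  group

end Matched

theorem stmt14_general {G : Type*} [Group G] (F : Subgroup G) (Q : Set G)
    (h1 : (1 : G) ∈ Q)
    (hL : ∀ g : G, ∃! xq : F × Q, (xq.1 : G) * (xq.2 : G) = g)
    (hR : ∀ g : G, ∃! py : Q × F, (py.1 : G) * (py.2 : G) = g)
    (actF : Q → F → F) (actQ : Q → F → Q)
    (hact : ∀ (q : Q) (x : F), (q : G) * (x : G) = (actF q x : G) * ((actQ q x : Q) : G))
    (mulQ : Q → Q → Q) (θ : Q → Q → F)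
    (hθ : ∀ p q : Q, (p : G) * (q : G) = ((θ p q : F) : G) * ((mulQ p q : Q) : G))
    (R : Q → Q)
    (hRdef : ∀ p : Q, mulQ p (R p) = ⟨1, h1⟩)
    (succ : Q → F → F)
    (hsucc : ∀ (p : Q) (x : F),
      succ p x = (θ p (R p))⁻¹ * actF p x * θ (actQ p x) (R (actQ p x))) :
    (∀ (p : Q) (x : F), succ p (actF (R p) x) = x ∧ actF (R p) (succ p x) = x) ∧
    (∀ p : Q, Function.Bijective (succ p)) := by
  have rightInv_mul_succ := rightInv_mul_eq_mul_rightInv_actQ h1 hact hθ hRdef hsucc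
  have actF_succ (p : Q) : Function.LeftInverse (actF (R p)) (succ p) := fun x =>
    Subgroup.left_factor_eq_of_existsUnique hL ((hact _ _).symm.trans (rightInv_mul_succ p x))
  have succ_actF (p : Q) : Function.LeftInverse (succ p) (actF (R p)) := by
    intro x
    have hRp : (R p : G) * x = actF (R p) x * actQ (R p) x := hact _ _
    have hq : R (actQ p (actF (R p) x)) = actQ (R p) x := by
      refine rightInv_actQ_eq_of_mul_mem h1 hR hact hθ hRdef ?_
      rw [mul_assoc, ← hRp, ← mul_assoc, mul_rightInv_eq_theta h1 hθ hRdef]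
      exact F.mul_mem (θ p (R p)).2 x.2
    apply Subtype.ext
    apply mul_left_cancel (a := (R p : G))
    rw [rightInv_mul_succ, hq, hRp]
  exact ⟨fun p x => ⟨succ_actF p x, actF_succ p x⟩,
    fun p => ⟨(actF_succ p).injective, (succ_actF p).surjective⟩⟩

theorem stmt14 {G : Type*} [Group G] [Fintype G] (F : Subgroup G) (Q : Set G)
    (h1 : (1 : G) ∈ Q)
    (hL : ∀ g : G, ∃! xq : F × Q, (xq.1 : G) * (xq.2 : G) = g)
    (hR : ∀ g : G, ∃! py : Q × F, (py.1 : G) * (py.2 : G) = g)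
    (actF : Q → F → F) (actQ : Q → F → Q)
    (hact : ∀ (q : Q) (x : F), (q : G) * (x : G) = (actF q x : G) * ((actQ q x : Q) : G))
    (mulQ : Q → Q → Q) (θ : Q → Q → F)
    (hθ : ∀ p q : Q, (p : G) * (q : G) = ((θ p q : F) : G) * ((mulQ p q : Q) : G))
    (L R : Q → Q)
    (hLdef : ∀ p : Q, mulQ (L p) p = ⟨1, h1⟩)
    (hRdef : ∀ p : Q, mulQ p (R p) = ⟨1, h1⟩)
    (succ : Q → F → F)
    (hsucc : ∀ (p : Q) (x : F),
      succ p x = (θ p (R p))⁻¹ * actF p x * θ (actQ p x) (R (actQ p x))) :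
    (∀ (p : Q) (x : F), succ p (actF (R p) x) = x ∧ actF (R p) (succ p x) = x) ∧
    (∀ p : Q, Function.Bijective (succ p)) :=
  stmt14_general F Q h1 hL hR actF actQ hact mulQ θ hθ R hRdef succ hsucc
end

section
/- For all p ∈ Q and x ∈ F, (p ◁ x)^R ◁ (p ≻ x)⁻¹ = p^R, where p ≻ x = θ(p, p^R)⁻¹ · (p ▷ x) · θ(p ◁ x, (p ◁ x)^R). -/
/-! Writing `p ▷ x = p x (p ◁ x)⁻¹` and `θ(q, q^R) = q q^R` (as `q.q^R = e`), the element
`p ≻ x` collapses to `(p^R)⁻¹ x (p ◁ x)^R`. Hence `(p ◁ x)^R (p ≻ x)⁻¹ = x⁻¹ p^R`, and uniqueness of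
the factorisation `G = F Q` reads off its `Q`-factor as `p^R`. -/

theorem right_factor_eq_of_mul_eq_mul {G : Type*} [Group G] {F : Subgroup G} {Q : Set G}
    (hL : ∀ g : G, ∃! xq : F × Q, (xq.1 : G) * (xq.2 : G) = g)
    {x y : F} {q r : Q} (h : (x : G) * q = y * r) : q = r :=
  congrArg Prod.snd ((hL ((y : G) * r)).unique (y₁ := (x, q)) (y₂ := (y, r)) h rfl)

theorem stmt15_general {G : Type*} [Group G] (F : Subgroup G) (Q : Set G)
    (h1 : (1 : G) ∈ Q)
    (hL : ∀ g : G, ∃! xq : F × Q, (xq.1 : G) * (xq.2 : G) = g)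
    (actF : Q → F → F) (actQ : Q → F → Q)
    (hact : ∀ (q : Q) (x : F), (q : G) * (x : G) = (actF q x : G) * ((actQ q x : Q) : G))
    (mulQ : Q → Q → Q) (θ : Q → Q → F)
    (hθ : ∀ p q : Q, (p : G) * (q : G) = ((θ p q : F) : G) * ((mulQ p q : Q) : G))
    (R : Q → Q)
    (hRdef : ∀ p : Q, mulQ p (R p) = ⟨1, h1⟩)
    (succ : Q → F → F)
    (hsucc : ∀ (p : Q) (x : F),
      succ p x = (θ p (R p))⁻¹ * actF p x * θ (actQ p x) (R (actQ p x))) :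
    ∀ (p : Q) (x : F), actQ (R (actQ p x)) (succ p x)⁻¹ = R p := by
  intro p x
  have hθR (q : Q) : ((θ q (R q) : F) : G) = q * R q := by
    simpa [hRdef] using (hθ q (R q)).symm
  have hactF : ((actF p x : F) : G) = p * x * ((actQ p x : Q) : G)⁻¹ :=
    eq_mul_inv_of_mul_eq (hact p x).symm
  have hsucc' : ((succ p x : F) : G) = ((R p : Q) : G)⁻¹ * x * R (actQ p x) := by
    simp only [hsucc, Subgroup.coe_mul, Subgroup.coe_inv, hθR, hactF]
    group
  refine right_factor_eq_of_mul_eq_mul hL (x := actF (R (actQ p x)) (succ p x)⁻¹) (y := x⁻¹) ?_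
  rw [← hact, Subgroup.coe_inv, Subgroup.coe_inv, hsucc']
  group

theorem stmt15 {G : Type*} [Group G] [Fintype G] (F : Subgroup G) (Q : Set G)
    (h1 : (1 : G) ∈ Q)
    (hL : ∀ g : G, ∃! xq : F × Q, (xq.1 : G) * (xq.2 : G) = g)
    (hR : ∀ g : G, ∃! py : Q × F, (py.1 : G) * (py.2 : G) = g)
    (actF : Q → F → F) (actQ : Q → F → Q)
    (hact : ∀ (q : Q) (x : F), (q : G) * (x : G) = (actF q x : G) * ((actQ q x : Q) : G))
    (mulQ : Q → Q → Q) (θ : Q → Q → F)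
    (hθ : ∀ p q : Q, (p : G) * (q : G) = ((θ p q : F) : G) * ((mulQ p q : Q) : G))
    (L R : Q → Q)
    (hLdef : ∀ p : Q, mulQ (L p) p = ⟨1, h1⟩)
    (hRdef : ∀ p : Q, mulQ p (R p) = ⟨1, h1⟩)
    (succ : Q → F → F)
    (hsucc : ∀ (p : Q) (x : F),
      succ p x = (θ p (R p))⁻¹ * actF p x * θ (actQ p x) (R (actQ p x))) :
    ∀ (p : Q) (x : F), actQ (R (actQ p x)) (succ p x)⁻¹ = R p :=
  stmt15_general F Q h1 hL actF actQ hact mulQ θ hθ R hRdef succ hsucc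
end

section
/- For all p ∈ Q and x, y ∈ F, p ≻ (xy) = (p ≻ x)·((p ◁ x) ≻ y), where p ≻ x = θ(p, p^R)⁻¹ · (p ▷ x) · θ(p ◁ x, (p ◁ x)^R). -/
/-! Since `p (x y) = (p ▷ x) ((p ◁ x) y) = (p ▷ x) ((p ◁ x) ▷ y) ((p ◁ x) ◁ y)`, uniqueness of the
factorisation `G = F Q` gives `p ▷ (x y) = (p ▷ x) ((p ◁ x) ▷ y)` and `p ◁ (x y) = (p ◁ x) ◁ y`.
In the product `(p ≻ x) ((p ◁ x) ≻ y)` the inner factors `θ(p ◁ x, (p ◁ x)^R)` then cancel. -/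

section MatchedPair

variable {G : Type*} [Group G] {F : Subgroup G} {Q : Set G}
  (hL : ∀ g : G, ∃! xq : F × Q, (xq.1 : G) * (xq.2 : G) = g)
  {actF : Q → F → F} {actQ : Q → F → Q}
  (hact : ∀ (q : Q) (x : F), (q : G) * (x : G) = (actF q x : G) * ((actQ q x : Q) : G))
include hL hact

theorem actF_actQ_mul (p : Q) (x y : F) :
    (actF p (x * y), actQ p (x * y)) = (actF p x * actF (actQ p x) y, actQ (actQ p x) y) := by
  apply (hL ((p : G) * ((x * y : F) : G))).unique (hact p (x * y)).symm
  calc ((actF p x * actF (actQ p x) y : F) : G) * (actQ (actQ p x) y : G)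
      = (actF p x : G) * ((actQ p x : G) * (y : G)) := by
        rw [Subgroup.coe_mul, mul_assoc, ← hact]
    _ = (p : G) * ((x * y : F) : G) := by
        rw [← mul_assoc, ← hact, Subgroup.coe_mul, mul_assoc]

theorem actF_mul (p : Q) (x y : F) : actF p (x * y) = actF p x * actF (actQ p x) y :=
  congrArg Prod.fst (actF_actQ_mul hL hact p x y)

theorem actQ_mul (p : Q) (x y : F) : actQ p (x * y) = actQ (actQ p x) y :=
  congrArg Prod.snd (actF_actQ_mul hL hact p x y)

end MatchedPair

theorem stmt16_general {G : Type*} [Group G] (F : Subgroup G) (Q : Set G)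
    (hL : ∀ g : G, ∃! xq : F × Q, (xq.1 : G) * (xq.2 : G) = g)
    (actF : Q → F → F) (actQ : Q → F → Q)
    (hact : ∀ (q : Q) (x : F), (q : G) * (x : G) = (actF q x : G) * ((actQ q x : Q) : G))
    (θ : Q → Q → F)
    (R : Q → Q)
    (succ : Q → F → F)
    (hsucc : ∀ (p : Q) (x : F),
      succ p x = (θ p (R p))⁻¹ * actF p x * θ (actQ p x) (R (actQ p x))) :
    ∀ (p : Q) (x y : F), succ p (x * y) = succ p x * succ (actQ p x) y := by
  intro p x y
  rw [hsucc, hsucc, hsucc, actF_mul hL hact, actQ_mul hL hact]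
  group

theorem stmt16 {G : Type*} [Group G] [Fintype G] (F : Subgroup G) (Q : Set G)
    (h1 : (1 : G) ∈ Q)
    (hL : ∀ g : G, ∃! xq : F × Q, (xq.1 : G) * (xq.2 : G) = g)
    (hR : ∀ g : G, ∃! py : Q × F, (py.1 : G) * (py.2 : G) = g)
    (actF : Q → F → F) (actQ : Q → F → Q)
    (hact : ∀ (q : Q) (x : F), (q : G) * (x : G) = (actF q x : G) * ((actQ q x : Q) : G))
    (mulQ : Q → Q → Q) (θ : Q → Q → F)
    (hθ : ∀ p q : Q, (p : G) * (q : G) = ((θ p q : F) : G) * ((mulQ p q : Q) : G))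
    (L R : Q → Q)
    (hLdef : ∀ p : Q, mulQ (L p) p = ⟨1, h1⟩)
    (hRdef : ∀ p : Q, mulQ p (R p) = ⟨1, h1⟩)
    (succ : Q → F → F)
    (hsucc : ∀ (p : Q) (x : F),
      succ p x = (θ p (R p))⁻¹ * actF p x * θ (actQ p x) (R (actQ p x))) :
    ∀ (p : Q) (x y : F), succ p (x * y) = succ p x * succ (actQ p x) y :=
  stmt16_general F Q hL actF actQ hact θ R succ hsucc
end

section
/- For every p ∈ Q, p ≻ θ(p^L, p)⁻¹ = θ(p, p^R)⁻¹, where p ≻ x = θ(p, p^R)⁻¹ · (p ▷ x) · θ(p ◁ x, (p ◁ x)^R). -/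
/-!
Put `x = θ(p^L, p)⁻¹` and `q = p ◁ x`. Since `p^L.p = e`, `θ(p^L, p) = p^L p` in `G`, so
`(p ▷ x) q = p x = (p^L)⁻¹`, i.e. `p^L (p ▷ x) = q⁻¹`. Likewise `q^R θ(q, q^R)⁻¹ = q⁻¹`. Both are
factorisations of `q⁻¹` as (element of `Q`)·(element of `F`), which are unique, so
`p ▷ x = θ(q, q^R)⁻¹` and the two outer factors of `p ≻ x` cancel.
-/

theorem Subgroup.snd_eq_of_mul_eq_mul_of_existsUnique {G : Type*} [Group G] {F : Subgroup G}
    {Q : Set G} (hR : ∀ g : G, ∃! py : Q × F, (py.1 : G) * (py.2 : G) = g)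
    {q₁ q₂ : Q} {x₁ x₂ : F} (h : (q₁ : G) * x₁ = q₂ * x₂) : x₁ = x₂ :=
  congrArg Prod.snd ((hR _).unique (y₁ := (q₁, x₁)) (y₂ := (q₂, x₂)) h rfl)

theorem stmt17_general {G : Type*} [Group G] (F : Subgroup G) (Q : Set G)
    (h1 : (1 : G) ∈ Q)
    (hR : ∀ g : G, ∃! py : Q × F, (py.1 : G) * (py.2 : G) = g)
    (actF : Q → F → F) (actQ : Q → F → Q)
    (hact : ∀ (q : Q) (x : F), (q : G) * (x : G) = (actF q x : G) * ((actQ q x : Q) : G))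
    (mulQ : Q → Q → Q) (θ : Q → Q → F)
    (hθ : ∀ p q : Q, (p : G) * (q : G) = ((θ p q : F) : G) * ((mulQ p q : Q) : G))
    (L R : Q → Q)
    (hLdef : ∀ p : Q, mulQ (L p) p = ⟨1, h1⟩)
    (hRdef : ∀ p : Q, mulQ p (R p) = ⟨1, h1⟩)
    (succ : Q → F → F)
    (hsucc : ∀ (p : Q) (x : F),
      succ p x = (θ p (R p))⁻¹ * actF p x * θ (actQ p x) (R (actQ p x))) :
    ∀ p : Q, succ p (θ (L p) p)⁻¹ = (θ p (R p))⁻¹ := by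
  intro p
  set x : F := (θ (L p) p)⁻¹
  set q : Q := actQ p x
  have hθL : ((θ (L p) p : F) : G) = L p * p := by simpa [hLdef] using (hθ (L p) p).symm
  have hθR : ((θ q (R q) : F) : G) = q * R q := by simpa [hRdef] using (hθ q (R q)).symm
  have hLp : (L p : G) * actF p x = (q : G)⁻¹ := by
    have hpx : (actF p x : G) * q = (L p : G)⁻¹ := by
      rw [← hact, InvMemClass.coe_inv, hθL]
      group
    rw [eq_mul_inv_of_mul_eq hpx]
    group
  have hRq : (R q : G) * ((θ q (R q))⁻¹ : F) = (q : G)⁻¹ := by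
    rw [InvMemClass.coe_inv, hθR]
    group
  have hactF : (θ q (R q))⁻¹ = actF p x :=
    Subgroup.snd_eq_of_mul_eq_mul_of_existsUnique hR (hRq.trans hLp.symm)
  rw [hsucc, ← hactF]
  exact inv_mul_cancel_right _ (θ q (R q))

theorem stmt17 {G : Type*} [Group G] [Fintype G] (F : Subgroup G) (Q : Set G)
    (h1 : (1 : G) ∈ Q)
    (hL : ∀ g : G, ∃! xq : F × Q, (xq.1 : G) * (xq.2 : G) = g)
    (hR : ∀ g : G, ∃! py : Q × F, (py.1 : G) * (py.2 : G) = g)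
    (actF : Q → F → F) (actQ : Q → F → Q)
    (hact : ∀ (q : Q) (x : F), (q : G) * (x : G) = (actF q x : G) * ((actQ q x : Q) : G))
    (mulQ : Q → Q → Q) (θ : Q → Q → F)
    (hθ : ∀ p q : Q, (p : G) * (q : G) = ((θ p q : F) : G) * ((mulQ p q : Q) : G))
    (L R : Q → Q)
    (hLdef : ∀ p : Q, mulQ (L p) p = ⟨1, h1⟩)
    (hRdef : ∀ p : Q, mulQ p (R p) = ⟨1, h1⟩)
    (succ : Q → F → F)
    (hsucc : ∀ (p : Q) (x : F),
      succ p x = (θ p (R p))⁻¹ * actF p x * θ (actQ p x) (R (actQ p x))) :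
    ∀ p : Q, succ p (θ (L p) p)⁻¹ = (θ p (R p))⁻¹ :=
  stmt17_general F Q h1 hR actF actQ hact mulQ θ hθ L R hLdef hRdef succ hsucc
end

section
/- Let ω : G × G × G → kˣ be a normalized 3-cocycle (k a field) whose restriction to F × F × F is trivial. Then there exists a normalized 2-cochain η : G × G → kˣ with η|_{F×F} = 1 such that ω·(dη) restricted to F × G × G is identically 1 and ω·(dη) restricted to F × F × Q is identically 1. -/
/-!
Write `g = φ(g) q(g)` with `φ(g) ∈ F` and `q(g) ∈ Q`. The cochain `μ(a, b) = ω(a, φ b, q b)`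
kills `ω` on `F × F × G`: this is the cocycle identity at `(x, y, φ g, q g)`, in which
`ω(x, y, φ g) = 1`. Then `ν(a, b) = ω'(φ a, q a, b)⁻¹` with `ω' = ω · dμ` kills `ω'` on
`F × G × G`: this is the cocycle identity for `ω'` at `(x, φ g, q g, h)`. Both cochains are
normalized and trivial on `F × F`, so `η = μ ν` works.
-/

section

variable {G M : Type*} [Group G]

section Cocycle

variable [CommGroup M]

def coboundary (η : G → G → M) : G → G → G → M :=
  fun a b c => η (a * b) c * η a b * (η b c)⁻¹ * (η a (b * c))⁻¹

def IsCocycle (ω : G → G → G → M) : Prop :=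
  ∀ a b c d, ω (a * b) c d * ω a b (c * d) = ω a b c * ω a (b * c) d * ω b c d

lemma IsCocycle.mul {ω ω' : G → G → G → M} (h : IsCocycle ω) (h' : IsCocycle ω') :
    IsCocycle (ω * ω') := by
  intro a b c d
  simp only [Pi.mul_apply]
  rw [mul_mul_mul_comm, h, h']
  ac_rfl

lemma isCocycle_coboundary (η : G → G → M) : IsCocycle (coboundary η) := by
  intro a b c d
  simp only [coboundary, mul_assoc]
  apply Additive.ofMul.injective
  simp only [ofMul_mul, ofMul_inv]
  abel

lemma coboundary_mul (μ ν : G → G → M) : coboundary (μ * ν) = coboundary μ * coboundary ν := by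
  funext a b c
  simp only [coboundary, Pi.mul_apply, mul_inv]
  ac_rfl

structure IsNormalizedCocycle (ω : G → G → G → M) : Prop where
  isCocycle : IsCocycle ω
  one_left : ∀ a b, ω 1 a b = 1
  one_mid : ∀ a b, ω a 1 b = 1
  one_right : ∀ a b, ω a b 1 = 1

lemma IsNormalizedCocycle.mul_coboundary {ω : G → G → G → M} (hω : IsNormalizedCocycle ω)
    {η : G → G → M} (hη₁ : ∀ a, η 1 a = 1) (hη₂ : ∀ a, η a 1 = 1) :
    IsNormalizedCocycle (ω * coboundary η) where
  isCocycle := hω.isCocycle.mul (isCocycle_coboundary η)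
  one_left a b := by simp [coboundary, hω.one_left, hη₁]
  one_mid a b := by simp [coboundary, hω.one_mid, hη₁, hη₂]
  one_right a b := by simp [coboundary, hω.one_right, hη₂]

end Cocycle

namespace Subgroup

lemma isComplement_of_existsUnique_mul_inv_mem {F : Subgroup G} {Q : Set G}
    (h : ∀ g : G, ∃! q : G, q ∈ Q ∧ q * g⁻¹ ∈ F) : IsComplement (F : Set G) Q := by
  rw [isComplement_iff_existsUnique_mul_inv_mem]
  intro g
  obtain ⟨q, ⟨hqQ, hqF⟩, hq⟩ := h g
  refine ⟨⟨q, hqQ⟩, by simpa using F.inv_mem hqF, fun t ht => Subtype.ext ?_⟩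
  exact hq t ⟨t.2, by simpa using F.inv_mem ht⟩

namespace IsComplement

variable {F : Subgroup G} {Q : Set G}

noncomputable def splitLast (hFQ : IsComplement (F : Set G) Q) (ω : G → G → G → M)
    (a b : G) : M :=
  ω a (hFQ.equiv b).1 (hFQ.equiv b).2

noncomputable def splitFirst (hFQ : IsComplement (F : Set G) Q) (ω : G → G → G → M)
    (a b : G) : M :=
  ω (hFQ.equiv a).1 (hFQ.equiv a).2 b

lemma splitLast_of_mem (hFQ : IsComplement (F : Set G) Q) (h1 : (1 : G) ∈ Q)
    (ω : G → G → G → M) (a : G) {b : G} (hb : b ∈ F) : splitLast hFQ ω a b = ω a b 1 := by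
  simp [splitLast, hFQ.equiv_fst_eq_self_of_mem_of_one_mem h1 hb,
    hFQ.equiv_snd_eq_one_of_mem_of_one_mem h1 hb]

lemma splitFirst_of_mem (hFQ : IsComplement (F : Set G) Q) (h1 : (1 : G) ∈ Q)
    (ω : G → G → G → M) {a : G} (ha : a ∈ F) (b : G) : splitFirst hFQ ω a b = ω a 1 b := by
  simp [splitFirst, hFQ.equiv_fst_eq_self_of_mem_of_one_mem h1 ha,
    hFQ.equiv_snd_eq_one_of_mem_of_one_mem h1 ha]

lemma coe_equiv_fst_mul_left (hFQ : IsComplement (F : Set G) Q) {x : G} (hx : x ∈ F) (g : G) :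
    ((hFQ.equiv (x * g)).1 : G) = x * (hFQ.equiv g).1 := by
  rw [hFQ.equiv_mul_left_of_mem hx]
  rfl

lemma equiv_snd_mul_left (hFQ : IsComplement (F : Set G) Q) {x : G} (hx : x ∈ F) (g : G) :
    (hFQ.equiv (x * g)).2 = (hFQ.equiv g).2 := by
  rw [hFQ.equiv_mul_left_of_mem hx]

variable [CommGroup M] {ω : G → G → G → M}

lemma mul_coboundary_splitLast_eq_one (hFQ : IsComplement (F : Set G) Q)
    (h1 : (1 : G) ∈ Q) (hω : IsNormalizedCocycle ω)
    (hF : ∀ x y z : F, ω x y z = 1) (x y : F) (g : G) :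
    (ω * coboundary (splitLast hFQ ω)) x y g = 1 := by
  have hcoc := hω.isCocycle x y (hFQ.equiv g).1 (hFQ.equiv g).2
  rw [hFQ.equiv_fst_mul_equiv_snd g, hF x y (hFQ.equiv g).1, one_mul] at hcoc
  simp only [Pi.mul_apply, coboundary, splitLast_of_mem hFQ h1 ω x y.2, hω.one_right, mul_one]
  simp only [splitLast, hFQ.coe_equiv_fst_mul_left y.2, hFQ.equiv_snd_mul_left y.2,
    eq_mul_inv_of_mul_eq hcoc]
  apply Additive.ofMul.injective
  simp only [ofMul_mul, ofMul_inv, ofMul_one]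
  abel

lemma mul_coboundary_inv_splitFirst_eq_one (hFQ : IsComplement (F : Set G) Q)
    (h1 : (1 : G) ∈ Q) (hω : IsNormalizedCocycle ω)
    (hF : ∀ (x y : F) (g : G), ω x y g = 1) (x : F) (g h : G) :
    (ω * coboundary (splitFirst hFQ ω)⁻¹) x g h = 1 := by
  have hcoc := hω.isCocycle x (hFQ.equiv g).1 (hFQ.equiv g).2 h
  rw [hFQ.equiv_fst_mul_equiv_snd g, hF x (hFQ.equiv g).1, hF x (hFQ.equiv g).1, one_mul,
    mul_one] at hcoc
  simp only [Pi.mul_apply, Pi.inv_apply, coboundary, splitFirst_of_mem hFQ h1 ω x.2, hω.one_mid]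
  simp only [splitFirst, hFQ.coe_equiv_fst_mul_left x.2, hFQ.equiv_snd_mul_left x.2, hcoc]
  apply Additive.ofMul.injective
  simp only [ofMul_mul, ofMul_inv, ofMul_one]
  abel

theorem exists_cochain_mul_coboundary_eq_one (hFQ : IsComplement (F : Set G) Q)
    (h1 : (1 : G) ∈ Q) (hω : IsNormalizedCocycle ω)
    (hF : ∀ x y z : F, ω x y z = 1) :
    ∃ η : G → G → M, (∀ a, η 1 a = 1 ∧ η a 1 = 1) ∧ (∀ x y : F, η x y = 1) ∧
      ∀ (x : F) (g h : G), (ω * coboundary η) x g h = 1 := by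
  set μ := splitLast hFQ ω
  have hμ_one_left (a : G) : μ 1 a = 1 := hω.one_left _ _
  have hμ_of_mem (a : G) {b : G} (hb : b ∈ F) : μ a b = ω a b 1 :=
    splitLast_of_mem hFQ h1 ω a hb
  have hμ_one_right (a : G) : μ a 1 = 1 := by rw [hμ_of_mem a F.one_mem, hω.one_right]
  have hω' := hω.mul_coboundary hμ_one_left hμ_one_right
  set ν := (splitFirst hFQ (ω * coboundary μ))⁻¹
  have hν_of_mem {a : G} (ha : a ∈ F) (b : G) : ν a b = 1 := by
    simp [ν, splitFirst_of_mem hFQ h1 _ ha, hω'.one_mid]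
  have hν_one_right (a : G) : ν a 1 = 1 := by simp [ν, splitFirst, hω'.one_right]
  refine ⟨μ * ν, fun a => ⟨?_, ?_⟩, fun x y => ?_, fun x g h => ?_⟩
  · simp [hμ_one_left, hν_of_mem F.one_mem]
  · simp [hμ_one_right, hν_one_right]
  · simp [hμ_of_mem x y.2, hω.one_right, hν_of_mem x.2]
  · rw [coboundary_mul, ← mul_assoc]
    exact mul_coboundary_inv_splitFirst_eq_one hFQ h1 hω'
      (mul_coboundary_splitLast_eq_one hFQ h1 hω hF) x g h

end IsComplement

end Subgroup

end

theorem stmt18_general {G : Type*} [Group G] (F : Subgroup G) (Q : Set G)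
    (h1 : (1 : G) ∈ Q)
    (hleft : ∀ g : G, ∃! q : G, q ∈ Q ∧ q * g⁻¹ ∈ F)
    {k : Type*} [Field k] (ω : G → G → G → kˣ)
    (hcoc : ∀ a b c d : G,
      ω (a * b) c d * ω a b (c * d) = ω a b c * ω a (b * c) d * ω b c d)
    (hnorm : ∀ a b : G, ω 1 a b = 1 ∧ ω a 1 b = 1 ∧ ω a b 1 = 1)
    (htriv : ∀ x y z : F, ω (x : G) (y : G) (z : G) = 1) :
    ∃ η : G → G → kˣ, (∀ a : G, η 1 a = 1 ∧ η a 1 = 1) ∧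
      (∀ x y : F, η (x : G) (y : G) = 1) ∧
      (∀ (x : F) (g h : G),
        ω (x : G) g h *
          (η ((x : G) * g) h * η (x : G) g * (η g h)⁻¹ * (η (x : G) (g * h))⁻¹) = 1) ∧
      (∀ (x y : F) (q : Q),
        ω (x : G) (y : G) (q : G) *
          (η ((x : G) * (y : G)) (q : G) * η (x : G) (y : G) * (η (y : G) (q : G))⁻¹ *
            (η (x : G) ((y : G) * (q : G)))⁻¹) = 1) := by
  have hω : IsNormalizedCocycle ω :=
    ⟨hcoc, fun a b => (hnorm a b).1, fun a b => (hnorm a b).2.1, fun a b => (hnorm a b).2.2⟩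
  obtain ⟨η, hη_norm, hη_F, hη⟩ :=
    (Subgroup.isComplement_of_existsUnique_mul_inv_mem hleft).exists_cochain_mul_coboundary_eq_one
      h1 hω htriv
  exact ⟨η, hη_norm, hη_F, hη, fun x y q => hη x y q⟩

theorem stmt18 {G : Type*} [Group G] [Fintype G] (F : Subgroup G) (Q : Set G)
    (h1 : (1 : G) ∈ Q)
    (hleft : ∀ g : G, ∃! q : G, q ∈ Q ∧ q * g⁻¹ ∈ F)
    (hright : ∀ g : G, ∃! q : G, q ∈ Q ∧ g⁻¹ * q ∈ F)
    {k : Type*} [Field k] (ω : G → G → G → kˣ)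
    (hcoc : ∀ a b c d : G,
      ω (a * b) c d * ω a b (c * d) = ω a b c * ω a (b * c) d * ω b c d)
    (hnorm : ∀ a b : G, ω 1 a b = 1 ∧ ω a 1 b = 1 ∧ ω a b 1 = 1)
    (htriv : ∀ x y z : F, ω (x : G) (y : G) (z : G) = 1) :
    ∃ η : G → G → kˣ, (∀ a : G, η 1 a = 1 ∧ η a 1 = 1) ∧
      (∀ x y : F, η (x : G) (y : G) = 1) ∧
      (∀ (x : F) (g h : G),
        ω (x : G) g h *
          (η ((x : G) * g) h * η (x : G) g * (η g h)⁻¹ * (η (x : G) (g * h))⁻¹) = 1) ∧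
      (∀ (x y : F) (q : Q),
        ω (x : G) (y : G) (q : G) *
          (η ((x : G) * (y : G)) (q : G) * η (x : G) (y : G) * (η (y : G) (q : G))⁻¹ *
            (η (x : G) ((y : G) * (q : G)))⁻¹) = 1) :=
  stmt18_general F Q h1 hleft ω hcoc hnorm htriv
end

section
/- Suppose the normalized 3-cocycle ω : G³ → kˣ satisfies ω|_{F×G×G} = 1 and ω|_{G×F×Q} = 1. Then for all g, h ∈ G, x, y ∈ F, p, q ∈ Q: (i) ω(xp, g, h) = ω(p, g, h); (ii) ω(g, y, xp) = ω(g, y, x); (iii) ω(g, x, pq) = ω(g, x, θ(p,q)); (iv) ω(pq, g, h) = ω(p.q, g, h). -/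
/-!
Both identities come from a single instance of the cocycle condition
`ω(ab,c,d) ω(a,b,cd) = ω(a,b,c) ω(a,bc,d) ω(b,c,d)` in which the normalization
hypotheses kill all factors but two: `(a,b,c,d) = (x,p,g,h)` gives (i), and
`(g,y,x,p)` gives (ii). Writing `pq = θ(p,q) (p.q)` turns (iii) into (ii) and (iv) into (i).
-/

def IsMulCocycle₃ {G M : Type*} [Mul G] [Mul M] (ω : G → G → G → M) : Prop :=
  ∀ a b c d : G, ω (a * b) c d * ω a b (c * d) = ω a b c * ω a (b * c) d * ω b c d

namespace IsMulCocycle₃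

variable {G M : Type*} [Mul G] [MulOneClass M] {ω : G → G → G → M}

theorem apply_mul_left_eq (hω : IsMulCocycle₃ ω) {a : G} (ha : ∀ b c, ω a b c = 1)
    (b c d : G) : ω (a * b) c d = ω b c d := by
  simpa only [ha, mul_one, one_mul] using hω a b c d

theorem apply_mul_right_eq (hω : IsMulCocycle₃ ω) {g y x p : G} (h₁ : ω (g * y) x p = 1)
    (h₂ : ω g (y * x) p = 1) (h₃ : ω y x p = 1) : ω g y (x * p) = ω g y x := by
  simpa only [h₁, h₂, h₃, mul_one, one_mul] using hω g y x p

end IsMulCocycle₃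

theorem stmt19_general {G : Type*} [Group G] (F : Subgroup G) (Q : Set G)
    (mulQ : Q → Q → Q) (θ : Q → Q → F)
    (hθ : ∀ p q : Q, (p : G) * (q : G) = ((θ p q : F) : G) * ((mulQ p q : Q) : G))
    {k : Type*} [Field k] (ω : G → G → G → kˣ)
    (hcoc : ∀ a b c d : G,
      ω (a * b) c d * ω a b (c * d) = ω a b c * ω a (b * c) d * ω b c d)
    (hF : ∀ (x : F) (g h : G), ω (x : G) g h = 1)
    (hFQ : ∀ (g : G) (x : F) (q : Q), ω g (x : G) (q : G) = 1) :
    (∀ (x : F) (p : Q) (g h : G), ω ((x : G) * (p : G)) g h = ω (p : G) g h) ∧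
    (∀ (g : G) (y x : F) (p : Q), ω g (y : G) ((x : G) * (p : G)) = ω g (y : G) (x : G)) ∧
    (∀ (g : G) (x : F) (p q : Q),
      ω g (x : G) ((p : G) * (q : G)) = ω g (x : G) ((θ p q : F) : G)) ∧
    (∀ (p q : Q) (g h : G),
      ω ((p : G) * (q : G)) g h = ω ((mulQ p q : Q) : G) g h) := by
  have hω : IsMulCocycle₃ ω := hcoc
  have hi : ∀ (x : F) (p : Q) (g h : G), ω ((x : G) * (p : G)) g h = ω (p : G) g h :=
    fun x p => hω.apply_mul_left_eq (hF x) p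
  have hii : ∀ (g : G) (y x : F) (p : Q),
      ω g (y : G) ((x : G) * (p : G)) = ω g (y : G) (x : G) := fun g y x p =>
    hω.apply_mul_right_eq (hFQ _ x p) (by exact_mod_cast hFQ g (y * x) p) (hF y x p)
  refine ⟨hi, hii, fun g x p q => ?_, fun p q => ?_⟩
  · rw [hθ]
    exact hii g x (θ p q) (mulQ p q)
  · rw [hθ]
    exact hi (θ p q) (mulQ p q)

theorem stmt19 {G : Type*} [Group G] [Fintype G] (F : Subgroup G) (Q : Set G)
    (h1 : (1 : G) ∈ Q)
    (hL : ∀ g : G, ∃! xq : F × Q, (xq.1 : G) * (xq.2 : G) = g)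
    (hR : ∀ g : G, ∃! py : Q × F, (py.1 : G) * (py.2 : G) = g)
    (actF : Q → F → F) (actQ : Q → F → Q)
    (hact : ∀ (q : Q) (x : F), (q : G) * (x : G) = (actF q x : G) * ((actQ q x : Q) : G))
    (mulQ : Q → Q → Q) (θ : Q → Q → F)
    (hθ : ∀ p q : Q, (p : G) * (q : G) = ((θ p q : F) : G) * ((mulQ p q : Q) : G))
    {k : Type*} [Field k] (ω : G → G → G → kˣ)
    (hcoc : ∀ a b c d : G,
      ω (a * b) c d * ω a b (c * d) = ω a b c * ω a (b * c) d * ω b c d)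
    (hnorm : ∀ a b : G, ω 1 a b = 1 ∧ ω a 1 b = 1 ∧ ω a b 1 = 1)
    (hF : ∀ (x : F) (g h : G), ω (x : G) g h = 1)
    (hFQ : ∀ (g : G) (x : F) (q : Q), ω g (x : G) (q : G) = 1) :
    (∀ (x : F) (p : Q) (g h : G), ω ((x : G) * (p : G)) g h = ω (p : G) g h) ∧
    (∀ (g : G) (y x : F) (p : Q), ω g (y : G) ((x : G) * (p : G)) = ω g (y : G) (x : G)) ∧
    (∀ (g : G) (x : F) (p q : Q),
      ω g (x : G) ((p : G) * (q : G)) = ω g (x : G) ((θ p q : F) : G)) ∧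
    (∀ (p q : Q) (g h : G),
      ω ((p : G) * (q : G)) g h = ω ((mulQ p q : Q) : G) g h) :=
  stmt19_general F Q mulQ θ hθ ω hcoc hF hFQ
end
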